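/- arXiv:2604.15498 — 3 statements merged into one kernel-verified Lean document; each statement's English description precedes it below -/
import Mathlib

section
/- Let Q be a poset in P^ℓ_MFP and let x, y ∈ Q satisfy y ∈ x^⊥ and x^⊥ ∩ y^⊥ = {0}. Then V'(x) ∩ V'(y) = ∅, i.e., no minimal prime ideal of Q contains both x and y. -/
namespace ZD

variable (Q : Type*) [PartialOrder Q] [OrderBot Q]

variable {Q} in
/-- The lower cone `A^ℓ` of a subset of a poset. -/
def lCone (A : Set Q) : Set Q := {x | ∀ a ∈ A, x ≤ a}

variable {Q} in
/-- The upper cone `A^u` of a subset of a poset. -/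
def uCone (A : Set Q) : Set Q := {x | ∀ a ∈ A, a ≤ x}

variable {Q} in
/-- An ideal of a poset: nonempty and `a, b ∈ I` implies `{a,b}^{uℓ} ⊆ I`. -/
def IsIdeal (I : Set Q) : Prop :=
  I.Nonempty ∧ ∀ a ∈ I, ∀ b ∈ I, lCone (uCone {a, b}) ⊆ I

variable {Q} in
/-- A filter of a poset: nonempty and `a, b ∈ F` implies `{a,b}^{ℓu} ⊆ F`. -/
def IsPFilter (F : Set Q) : Prop :=
  F.Nonempty ∧ ∀ a ∈ F, ∀ b ∈ F, uCone (lCone {a, b}) ⊆ F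

variable {Q} in
/-- An ℓ-filter: a filter such that `{a,b}^ℓ ∩ F ≠ ∅` for all `a, b ∈ F`. -/
def IsLFilter (F : Set Q) : Prop :=
  IsPFilter F ∧ ∀ a ∈ F, ∀ b ∈ F, (lCone {a, b} ∩ F).Nonempty

variable {Q} in
/-- A prime ideal of a poset. -/
def IsPrimeIdeal (P : Set Q) : Prop :=
  IsIdeal P ∧ P ≠ Set.univ ∧ ∀ x y : Q, lCone {x, y} ⊆ P → x ∈ P ∨ y ∈ P

variable {Q} in
/-- A prime filter of a poset. -/
def IsPrimeFilter (F : Set Q) : Prop :=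
  IsPFilter F ∧ F ≠ Set.univ ∧ ∀ x y : Q, uCone {x, y} ⊆ F → x ∈ F ∨ y ∈ F

variable {Q} in
/-- A maximal filter: maximal among proper filters. -/
def IsMaxFilter (F : Set Q) : Prop :=
  IsPFilter F ∧ F ≠ Set.univ ∧
    ∀ G : Set Q, IsPFilter G → G ≠ Set.univ → F ⊆ G → F = G

variable {Q} in
/-- A maximal ℓ-filter: maximal among proper ℓ-filters. -/
def IsMaxLFilter (F : Set Q) : Prop :=
  IsLFilter F ∧ F ≠ Set.univ ∧
    ∀ G : Set Q, IsLFilter G → G ≠ Set.univ → F ⊆ G → F = G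

/-- The class `P^ℓ_MFP`: every maximal filter is prime and every maximal ℓ-filter
is a maximal filter. -/
def MemPMFPl : Prop :=
  (∀ F : Set Q, IsMaxFilter F → IsPrimeFilter F) ∧
  (∀ F : Set Q, IsMaxLFilter F → IsMaxFilter F)

variable {Q} in
/-- A minimal prime ideal of a poset. -/
def IsMinPrimeIdeal (P : Set Q) : Prop :=
  IsPrimeIdeal P ∧ ∀ P' : Set Q, IsPrimeIdeal P' → P' ⊆ P → P' = P

variable {Q} in
/-- The annihilator `x^⊥` of an element. -/
def ann (x : Q) : Set Q := {y | lCone {x, y} = {⊥}}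

variable {Q} in
/-- The annihilator `A^⊥` of a subset. -/
def annSet (A : Set Q) : Set Q := {y | ∀ x ∈ A, lCone {x, y} = {⊥}}

variable {Q} in
/-- The smallest ideal `(x] ∨ (y]` containing the principal ideals `(x]` and `(y]`. -/
def idealSup (x y : Q) : Set Q :=
  ⋂₀ {I : Set Q | IsIdeal I ∧ Set.Iic x ⊆ I ∧ Set.Iic y ⊆ I}

/-- A poset is quasi-complemented if for every `x` there is `y ≠ x` with
`{x,y}^ℓ = {0}` and `((x] ∨ (y])^⊥ = {0}`. -/
def QuasiComplemented : Prop :=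
  ∀ x : Q, ∃ y : Q, y ≠ x ∧ lCone {x, y} = {⊥} ∧ annSet (idealSup x y) = {⊥}

/-- A poset is weakly quasi-complemented if for every `x` there are finitely many
`y₁, …, yₙ` (n ≥ 1), all distinct from `x`, with `x^⊥⊥ = y₁^⊥ ∩ ⋯ ∩ yₙ^⊥`. -/
def WeaklyQuasiComplemented : Prop :=
  ∀ x : Q, ∃ s : Finset Q, s.Nonempty ∧ x ∉ s ∧ annSet (ann x) = ⋂ y ∈ s, ann y

/-- The annihilator condition (a.c.). -/
def SatisfiesAC : Prop := ∀ x y : Q, ∃ z : Q, ann x ∩ ann y = ann z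

/-- The prime spectrum of a poset. -/
def Spec := {P : Set Q // IsPrimeIdeal P}

/-- The Zariski topology on `Spec Q`, whose closed sets are the sets
`V(I) = {P : I ⊆ P}` for ideals `I` of `Q`. -/
instance : TopologicalSpace (Spec Q) :=
  TopologicalSpace.generateFrom
    {U : Set (Spec Q) | ∃ I : Set Q, IsIdeal I ∧ U = {P : Spec Q | ¬ I ⊆ P.1}}

variable {Q} in
/-- `V(x)`: the prime ideals containing `x`. -/
def zV (x : Q) : Set (Spec Q) := {P : Spec Q | x ∈ P.1}

variable {Q} in
/-- `D(x)`: the prime ideals not containing `x`. -/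
def zD (x : Q) : Set (Spec Q) := {P : Spec Q | x ∉ P.1}

/-- `Min(Q)` as a subset of `Spec Q`. -/
def MinSpec : Set (Spec Q) := {P : Spec Q | ∀ P' : Set Q, IsPrimeIdeal P' → P' ⊆ P.1 → P' = P.1}

variable {Q} in
/-- Adjacency in the zero-divisor graph `Γ(Q)`. -/
def zdAdj (x y : Q) : Prop :=
  x ≠ y ∧ x ≠ ⊥ ∧ y ≠ ⊥ ∧ lCone {x, y} = ({⊥} : Set Q)

variable {Q} in
/-- Vertices of the zero-divisor graph `Γ(Q)`: the nonzero zero-divisors. -/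
def IsZDVertex (x : Q) : Prop :=
  x ≠ ⊥ ∧ ∃ y : Q, y ≠ ⊥ ∧ lCone {x, y} = ({⊥} : Set Q)

variable {Q} in
/-- `y` is a complement of `x` in `Γ(Q)`. -/
def IsComplementOf (x y : Q) : Prop :=
  zdAdj x y ∧ ∀ c : Q, ¬ (zdAdj c x ∧ zdAdj c y)

/-- The zero-divisor graph `Γ(Q)` is complemented. -/
def GammaComplemented : Prop :=
  ∀ x : Q, IsZDVertex x → ∃ y : Q, IsComplementOf x y

/-- The zero-divisor graph `Γ(Q)` is uniquely complemented. -/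
def GammaUniquelyComplemented : Prop :=
  GammaComplemented Q ∧
    ∀ a b c : Q, IsComplementOf a b → IsComplementOf a c →
      ∀ x : Q, (zdAdj x b ↔ zdAdj x c)

end ZD

section Aux

open ZD

variable {Q : Type*} [PartialOrder Q] [OrderBot Q]

lemma mem_lCone_pair {a b t : Q} : t ∈ lCone ({a, b} : Set Q) ↔ t ≤ a ∧ t ≤ b := by
  simp [lCone]

lemma mem_uCone_pair {a b t : Q} : t ∈ uCone ({a, b} : Set Q) ↔ a ≤ t ∧ b ≤ t := by
  simp [uCone]

lemma bot_mem_lCone (A : Set Q) : ⊥ ∈ lCone A := fun _ _ => bot_le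

lemma filter_up {F : Set Q} (hF : IsPFilter F) {t s : Q} (ht : t ∈ F) (hts : t ≤ s) : s ∈ F :=
  hF.2 t ht t ht (fun u hu => ((mem_lCone_pair.1 hu).1).trans hts)

lemma ideal_down {I : Set Q} (hI : IsIdeal I) {a t : Q} (ha : a ∈ I) (hta : t ≤ a) : t ∈ I :=
  hI.2 a ha a ha (fun s hs => hta.trans (mem_uCone_pair.1 hs).1)

lemma bot_mem_ideal {I : Set Q} (hI : IsIdeal I) : ⊥ ∈ I := by
  obtain ⟨a, ha⟩ := hI.1
  exact ideal_down hI ha bot_le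

lemma filter_bot_univ {F : Set Q} (hF : IsPFilter F) (hb : ⊥ ∈ F) : F = Set.univ := by
  ext s
  simp only [Set.mem_univ, iff_true]
  exact filter_up hF hb bot_le

/-- The complement of a prime ideal is a proper ℓ-filter. -/
lemma compl_prime_lFilter {P : Set Q} (hP : IsPrimeIdeal P) :
    IsLFilter Pᶜ ∧ Pᶜ ≠ Set.univ := by
  obtain ⟨hI, hproper, hprime⟩ := hP
  have hne : Pᶜ.Nonempty := by
    rw [Set.nonempty_compl]; exact hproper
  have hl : ∀ a ∈ Pᶜ, ∀ b ∈ Pᶜ, (lCone {a, b} ∩ Pᶜ).Nonempty := by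
    intro a ha b hb
    by_contra h
    rw [Set.not_nonempty_iff_eq_empty, ← Set.disjoint_iff_inter_eq_empty,
      Set.disjoint_compl_right_iff_subset] at h
    rcases hprime a b h with h' | h'
    · exact ha h'
    · exact hb h'
  refine ⟨⟨⟨hne, ?_⟩, hl⟩, ?_⟩
  · intro a ha b hb w hw hwP
    obtain ⟨t, htab, htP⟩ := hl a ha b hb
    exact htP (ideal_down hI hwP (hw t htab))
  · intro h
    have : ⊥ ∈ Pᶜ := h ▸ Set.mem_univ _
    exact this (bot_mem_ideal hI)

/-- The complement of a maximal ℓ-filter is a prime ideal (under `P^ℓ_MFP`). -/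
lemma compl_maxLFilter_prime {M : Set Q} (hQ : MemPMFPl Q) (hM : IsMaxLFilter M) :
    IsPrimeIdeal Mᶜ := by
  have hmax : IsMaxFilter M := hQ.2 M hM
  have hpr : IsPrimeFilter M := hQ.1 M hmax
  obtain ⟨⟨hF, hl⟩, hproper, _⟩ := hM
  have hbot : ⊥ ∉ M := fun hb => hproper (filter_bot_univ hF hb)
  refine ⟨⟨⟨⊥, hbot⟩, ?_⟩, ?_, ?_⟩
  · intro a ha b hb t ht htM
    have hsub : uCone ({a, b} : Set Q) ⊆ M := fun s hs => filter_up hF htM (ht s hs)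
    rcases hpr.2.2 a b hsub with h | h
    · exact ha h
    · exact hb h
  · intro h
    obtain ⟨m, hm⟩ := hF.1
    have : m ∈ Mᶜ := h ▸ Set.mem_univ _
    exact this hm
  · intro u v huv
    by_contra h
    push_neg at h
    obtain ⟨hu, hv⟩ := h
    simp only [Set.mem_compl_iff, not_not] at hu hv
    obtain ⟨t, htl, htM⟩ := hl u hu v hv
    exact huv htl htM

/-- Every proper ℓ-filter extends to a maximal ℓ-filter. -/
lemma exists_maxLFilter {F : Set Q} (hF : IsLFilter F) (hproper : F ≠ Set.univ) :
    ∃ M : Set Q, F ⊆ M ∧ IsMaxLFilter M := by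
  have hbotF : ⊥ ∉ F := fun hb => hproper (filter_bot_univ hF.1 hb)
  set S : Set (Set Q) := {G | IsLFilter G ∧ ⊥ ∉ G}
  have hzorn : ∀ c ⊆ S, IsChain (· ⊆ ·) c → c.Nonempty → ∃ ub ∈ S, ∀ s ∈ c, s ⊆ ub := by
    intro c hcS hchain hcne
    refine ⟨⋃₀ c, ⟨⟨⟨?_, ?_⟩, ?_⟩, ?_⟩, fun s hs => Set.subset_sUnion_of_mem hs⟩
    · obtain ⟨G, hG⟩ := hcne
      obtain ⟨g, hg⟩ := (hcS hG).1.1.1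
      exact ⟨g, G, hG, hg⟩
    · rintro a ⟨G1, hG1, ha⟩ b ⟨G2, hG2, hb⟩ t ht
      rcases hchain.total hG1 hG2 with h | h
      · exact ⟨G2, hG2, (hcS hG2).1.1.2 a (h ha) b hb ht⟩
      · exact ⟨G1, hG1, (hcS hG1).1.1.2 a ha b (h hb) ht⟩
    · rintro a ⟨G1, hG1, ha⟩ b ⟨G2, hG2, hb⟩
      rcases hchain.total hG1 hG2 with h | h
      · obtain ⟨t, ht1, ht2⟩ := (hcS hG2).1.2 a (h ha) b hb
        exact ⟨t, ht1, G2, hG2, ht2⟩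
      · obtain ⟨t, ht1, ht2⟩ := (hcS hG1).1.2 a ha b (h hb)
        exact ⟨t, ht1, G1, hG1, ht2⟩
    · rintro ⟨G, hG, hb⟩
      exact (hcS hG).2 hb
  obtain ⟨M, hFM, hMS, hMmax⟩ := zorn_subset_nonempty S hzorn F ⟨hF, hbotF⟩
  refine ⟨M, hFM, ⟨hMS.1, ?_, ?_⟩⟩
  · intro h
    exact hMS.2 (h ▸ Set.mem_univ _)
  · intro G hG hGproper hMG
    have hGbot : ⊥ ∉ G := fun hb => hGproper (filter_bot_univ hG.1 hb)
    exact hMG.antisymm (hMmax ⟨hG, hGbot⟩ hMG)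

/-- The complement of a minimal prime ideal is a maximal ℓ-filter. -/
lemma compl_minPrime_maxLFilter {P : Set Q} (hQ : MemPMFPl Q)
    (hP : IsPrimeIdeal P) (hmin : ∀ P' : Set Q, IsPrimeIdeal P' → P' ⊆ P → P' = P) :
    IsMaxLFilter Pᶜ := by
  obtain ⟨hPl, hPproper⟩ := compl_prime_lFilter hP
  refine ⟨hPl, hPproper, ?_⟩
  intro G hG hGproper hPG
  obtain ⟨M, hGM, hM⟩ := exists_maxLFilter hG hGproper
  have hMc : IsPrimeIdeal Mᶜ := compl_maxLFilter_prime hQ hM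
  have hsub : Mᶜ ⊆ P := by
    intro t ht
    by_contra htP
    exact ht (hGM (hPG htP))
  have heq : Mᶜ = P := hmin Mᶜ hMc hsub
  have hMeq : M = Pᶜ := by rw [← heq, compl_compl]
  exact Set.Subset.antisymm hPG (hMeq ▸ hGM)

/-- Key lemma: if `P` is a minimal prime ideal and `a ∈ P`, then `a^⊥ ⊄ P`. -/
lemma ann_not_subset {P : Set Q} (hQ : MemPMFPl Q)
    (hP : IsPrimeIdeal P) (hmin : ∀ P' : Set Q, IsPrimeIdeal P' → P' ⊆ P → P' = P)
    {a : Q} (ha : a ∈ P) : ∃ b, b ∉ P ∧ lCone ({a, b} : Set Q) = ({⊥} : Set Q) := by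
  by_contra h
  push_neg at h
  have hann : ∀ b : Q, lCone ({a, b} : Set Q) = ({⊥} : Set Q) → b ∈ P := by
    intro b hb
    by_contra hbP
    exact (h b hbP) hb
  have hmaxL : IsMaxLFilter Pᶜ := compl_minPrime_maxLFilter hQ hP hmin
  have hmaxF : IsMaxFilter Pᶜ := hQ.2 _ hmaxL
  -- the filter generated by `Pᶜ ∪ {a}`
  set D : Set Q := {d | ∃ f ∈ Pᶜ, lCone ({a, f} : Set Q) ⊆ {t | t ≤ d}} with hD
  obtain ⟨f₀, hf₀⟩ : Pᶜ.Nonempty := hmaxL.1.1.1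
  have haD : a ∈ D := ⟨f₀, hf₀, fun t ht => (mem_lCone_pair.1 ht).1⟩
  have hPD : Pᶜ ⊆ D := fun f hf => ⟨f, hf, fun t ht => (mem_lCone_pair.1 ht).2⟩
  have hDfilter : IsPFilter D := by
    refine ⟨⟨a, haD⟩, ?_⟩
    rintro d₁ ⟨f₁, hf₁, h₁⟩ d₂ ⟨f₂, hf₂, h₂⟩ e he
    obtain ⟨f, hfl, hfP⟩ := hmaxL.1.2 f₁ hf₁ f₂ hf₂
    refine ⟨f, hfP, fun t ht => ?_⟩
    obtain ⟨hta, htf⟩ := mem_lCone_pair.1 ht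
    obtain ⟨htf₁, htf₂⟩ := mem_lCone_pair.1 hfl
    have ht₁ : t ≤ d₁ := h₁ (mem_lCone_pair.2 ⟨hta, htf.trans htf₁⟩)
    have ht₂ : t ≤ d₂ := h₂ (mem_lCone_pair.2 ⟨hta, htf.trans htf₂⟩)
    exact he t (mem_lCone_pair.2 ⟨ht₁, ht₂⟩)
  have hDproper : D ≠ Set.univ := by
    intro huniv
    have hbD : ⊥ ∈ D := huniv ▸ Set.mem_univ _
    obtain ⟨f, hfP, hf⟩ := hbD
    have : lCone ({a, f} : Set Q) = ({⊥} : Set Q) := by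
      apply Set.Subset.antisymm
      · intro t ht
        exact le_bot_iff.1 (hf ht)
      · intro t ht
        rw [Set.mem_singleton_iff] at ht
        exact ht ▸ bot_mem_lCone _
    exact hfP (hann f this)
  have : Pᶜ = D := hmaxF.2.2 D hDfilter hDproper hPD
  exact (this ▸ haD : a ∈ Pᶜ) ha

end Aux

open ZD in
/-- If `Q ∈ P^ℓ_MFP`, `y ∈ x^⊥` and `x^⊥ ∩ y^⊥ = {0}`, then no minimal
prime ideal of `Q` contains both `x` and `y`, i.e. `V'(x) ∩ V'(y) = ∅`. -/
theorem stmt_4 (Q : Type*) [PartialOrder Q] [OrderBot Q] (hQ : MemPMFPl Q)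
    (x y : Q) (hy : y ∈ ann x) (hxy : ann x ∩ ann y = ({⊥} : Set Q)) :
    {P ∈ MinSpec Q | x ∈ P.1} ∩ {P ∈ MinSpec Q | y ∈ P.1} = ∅ := by
  rw [Set.eq_empty_iff_forall_notMem]
  rintro P ⟨⟨hPmin, hxP⟩, _, hyP⟩
  have hP : IsPrimeIdeal P.1 := P.2
  obtain ⟨b, hbP, hb⟩ := ann_not_subset hQ hP hPmin hxP
  obtain ⟨c, hcP, hc⟩ := ann_not_subset hQ hP hPmin hyP
  have hbc : lCone ({b, c} : Set Q) ⊆ P.1 := by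
    intro t ht
    obtain ⟨htb, htc⟩ := mem_lCone_pair.1 ht
    have htx : t ∈ ann x := by
      apply Set.Subset.antisymm
      · intro s hs
        obtain ⟨hsx, hst⟩ := mem_lCone_pair.1 hs
        have : s ∈ lCone ({x, b} : Set Q) := mem_lCone_pair.2 ⟨hsx, hst.trans htb⟩
        exact hb ▸ this
      · intro s hs
        rw [Set.mem_singleton_iff] at hs
        exact hs ▸ bot_mem_lCone _
    have hty : t ∈ ann y := by
      apply Set.Subset.antisymm
      · intro s hs
        obtain ⟨hsy, hst⟩ := mem_lCone_pair.1 hs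
        have : s ∈ lCone ({y, c} : Set Q) := mem_lCone_pair.2 ⟨hsy, hst.trans htc⟩
        exact hc ▸ this
      · intro s hs
        rw [Set.mem_singleton_iff] at hs
        exact hs ▸ bot_mem_lCone _
    have : t ∈ ({⊥} : Set Q) := hxy ▸ Set.mem_inter htx hty
    rw [Set.mem_singleton_iff] at this
    exact this ▸ bot_mem_ideal hP.1
  rcases hP.2.2 b c hbc with h | h
  · exact hbP h
  · exact hcP h
end

section
/- Let Q be a poset with least element 0. Then the zero-divisor graph Γ(Q) is complemented if and only if Γ(Q) is uniquely complemented. -/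
namespace ZD

variable (Q : Type*) [PartialOrder Q] [OrderBot Q]

section Aux

variable {Q} in
lemma zdAdj.symm {x y : Q} (h : zdAdj x y) : zdAdj y x :=
  ⟨h.1.symm, h.2.2.1, h.2.1, by rw [Set.pair_comm]; exact h.2.2.2⟩

variable {Q} in
lemma bot_mem_lCone (A : Set Q) : ⊥ ∈ lCone A := fun _ _ => bot_le

variable {Q} in
lemma mem_lCone_pair {w x y : Q} : w ∈ lCone ({x, y} : Set Q) ↔ w ≤ x ∧ w ≤ y := by
  constructor
  · intro h; exact ⟨h x (Or.inl rfl), h y (Or.inr rfl)⟩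
  · rintro ⟨h1, h2⟩ u (rfl | hu)
    · exact h1
    · cases hu; exact h2

variable {Q} in
/-- Key lemma: if `a ⊥ b` and `a ⊥ c` then any neighbor of `b` is a neighbor of `c`. -/
lemma adj_of_adj {a b c x : Q} (hb : IsComplementOf a b) (hc : IsComplementOf a c)
    (hx : zdAdj x b) : zdAdj x c := by
  obtain ⟨hxb, hxbot, hbbot, hxbl⟩ := hx
  have hcbot : c ≠ ⊥ := hc.1.2.2.1
  -- x ≠ c
  have hxc : x ≠ c := by
    rintro rfl
    exact hb.2 x ⟨hc.1.symm, hxb, hxbot, hbbot, hxbl⟩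
  refine ⟨hxc, hxbot, hcbot, ?_⟩
  refine Set.Subset.antisymm ?_ (by rintro z rfl; exact bot_mem_lCone _)
  intro z hz
  by_contra hzbot
  have hzx : z ≤ x := hz x (Or.inl rfl)
  have hzc : z ≤ c := hz c (Or.inr rfl)
  -- z ∈ ann b
  have hzb : lCone ({z, b} : Set Q) = {⊥} := by
    refine Set.Subset.antisymm ?_ (by rintro w rfl; exact bot_mem_lCone _)
    intro w hw
    exact hxbl.subset (mem_lCone_pair.2 ⟨(mem_lCone_pair.1 hw).1.trans hzx,
      (mem_lCone_pair.1 hw).2⟩)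
  -- z ∈ ann a
  have hza : lCone ({z, a} : Set Q) = {⊥} := by
    refine Set.Subset.antisymm ?_ (by rintro w rfl; exact bot_mem_lCone _)
    intro w hw
    refine hc.1.2.2.2.subset (mem_lCone_pair.2 ⟨(mem_lCone_pair.1 hw).2,
      (mem_lCone_pair.1 hw).1.trans hzc⟩)
  -- z ≠ a and z ≠ b
  have hza' : z ≠ a := by
    rintro rfl
    exact hzbot (Set.mem_singleton_iff.1 (hza ▸ mem_lCone_pair.2 ⟨le_refl z, le_refl z⟩))
  have hzb' : z ≠ b := by
    rintro rfl
    exact hzbot (Set.mem_singleton_iff.1 (hzb ▸ mem_lCone_pair.2 ⟨le_refl z, le_refl z⟩))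
  exact hb.2 z ⟨⟨hza', hzbot, hb.1.2.1, hza⟩, ⟨hzb', hzbot, hbbot, hzb⟩⟩

end Aux

end ZD

open ZD in
/-- For any poset `Q` with least element `0`, the zero-divisor graph
`Γ(Q)` is complemented iff it is uniquely complemented. -/
theorem stmt_6 (Q : Type*) [PartialOrder Q] [OrderBot Q] :
    GammaComplemented Q ↔ GammaUniquelyComplemented Q := by
  constructor
  · intro h
    exact ⟨h, fun a b c hb hc x => ⟨ZD.adj_of_adj hb hc, ZD.adj_of_adj hc hb⟩⟩
  · exact fun h => h.1
end

section
/- Let Q be a poset in P^ℓ_MFP. Then for any finitely many elements x_1, x_2, …, x_n ∈ Q (n ≥ 1), the annihilator of the set ({x_1,…,x_n}^u)^ℓ equals the intersection x_1^⊥ ∩ x_2^⊥ ∩ ⋯ ∩ x_n^⊥. -/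
section Aux
open ZD
variable {Q : Type*} [PartialOrder Q] [OrderBot Q]

lemma aux_mem_lCone_pair {x a b : Q} : x ∈ lCone ({a, b} : Set Q) ↔ x ≤ a ∧ x ≤ b := by
  simp [lCone]

lemma aux_upclosed {F : Set Q} (hF : IsPFilter F) {a b : Q} (ha : a ∈ F) (hab : a ≤ b) :
    b ∈ F := by
  apply hF.2 a ha a ha
  intro c hc
  exact le_trans (aux_mem_lCone_pair.1 hc).1 hab

lemma aux_bot_mem_univ {F : Set Q} (hF : IsPFilter F) (hbot : ⊥ ∈ F) : F = Set.univ := by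
  ext t
  simp only [Set.mem_univ, iff_true]
  exact aux_upclosed hF hbot bot_le

lemma aux_Ici_lfilter {w : Q} : IsLFilter (Set.Ici w) := by
  refine ⟨⟨⟨w, le_refl w⟩, ?_⟩, ?_⟩
  · intro a ha b hb t ht
    exact ht w (aux_mem_lCone_pair.2 ⟨ha, hb⟩)
  · intro a ha b hb
    exact ⟨w, aux_mem_lCone_pair.2 ⟨ha, hb⟩, le_refl w⟩

/-- Zorn: a proper ℓ-filter extends to a maximal ℓ-filter. -/
lemma aux_exists_max_lfilter {w : Q} (hw : w ≠ ⊥) :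
    ∃ F : Set Q, IsMaxLFilter F ∧ w ∈ F := by
  set S : Set (Set Q) := {G | IsLFilter G ∧ G ≠ Set.univ ∧ Set.Ici w ⊆ G} with hS
  have hIci : Set.Ici w ∈ S := by
    refine ⟨aux_Ici_lfilter, ?_, subset_refl _⟩
    intro h
    have : ⊥ ∈ Set.Ici w := h ▸ Set.mem_univ _
    exact hw (le_antisymm this bot_le)
  have hH : ∀ c ⊆ S, IsChain (· ⊆ ·) c → c.Nonempty → ∃ ub ∈ S, ∀ s ∈ c, s ⊆ ub := by
    intro c hcS hchain hcne
    refine ⟨⋃₀ c, ⟨⟨⟨?_, ?_⟩, ?_⟩, ?_, ?_⟩, fun s hs => Set.subset_sUnion_of_mem hs⟩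
    · obtain ⟨G, hG⟩ := hcne
      obtain ⟨g, hg⟩ := (hcS hG).1.1.1
      exact ⟨g, G, hG, hg⟩
    · rintro a ⟨Ga, hGa, haG⟩ b ⟨Gb, hGb, hbG⟩ t ht
      obtain hab | hab := hchain.total hGa hGb
      · exact ⟨Gb, hGb, (hcS hGb).1.1.2 a (hab haG) b hbG ht⟩
      · exact ⟨Ga, hGa, (hcS hGa).1.1.2 a haG b (hab hbG) ht⟩
    · rintro a ⟨Ga, hGa, haG⟩ b ⟨Gb, hGb, hbG⟩
      obtain hab | hab := hchain.total hGa hGb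
      · obtain ⟨t, ht1, ht2⟩ := (hcS hGb).1.2 a (hab haG) b hbG
        exact ⟨t, ht1, Gb, hGb, ht2⟩
      · obtain ⟨t, ht1, ht2⟩ := (hcS hGa).1.2 a haG b (hab hbG)
        exact ⟨t, ht1, Ga, hGa, ht2⟩
    · intro h
      have : ⊥ ∈ ⋃₀ c := h ▸ Set.mem_univ _
      obtain ⟨G, hG, hbG⟩ := this
      exact (hcS hG).2.1 (aux_bot_mem_univ (hcS hG).1.1 hbG)
    · obtain ⟨G, hG⟩ := hcne
      exact ((hcS hG).2.2).trans (Set.subset_sUnion_of_mem hG)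
  obtain ⟨F, hsub, hmax⟩ := zorn_subset_nonempty S hH _ hIci
  obtain ⟨hFl, hFne, hFw⟩ := hmax.1
  refine ⟨F, ⟨hFl, hFne, ?_⟩, hFw (le_refl w)⟩
  intro G hG hGne hFG
  exact subset_antisymm hFG (hmax.2 ⟨hG, hGne, hFw.trans hFG⟩ hFG)

/-- Finite primeness: if no element of a nonempty finite set is in a prime
filter, then some common upper bound is not in the filter. -/
lemma aux_prime_finset {F : Set Q} (hF : IsPrimeFilter F) (s : Finset Q)
    (hs : s.Nonempty) (h : ∀ x ∈ s, x ∉ F) :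
    ∃ t ∈ uCone (↑s : Set Q), t ∉ F := by
  induction hs using Finset.Nonempty.cons_induction with
  | singleton a =>
    refine ⟨a, ?_, h a (by simp)⟩
    intro c hc
    simp only [Finset.coe_singleton, Set.mem_singleton_iff] at hc
    exact hc ▸ le_refl a
  | cons a s ha hs ih =>
    obtain ⟨t, htu, htF⟩ := ih (fun x hx => h x (Finset.mem_cons_of_mem hx))
    have haF : a ∉ F := h a (Finset.mem_cons_self a s)
    have : ¬ uCone ({a, t} : Set Q) ⊆ F := by
      intro hsub
      rcases hF.2.2 a t hsub with h1 | h1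
      · exact haF h1
      · exact htF h1
    obtain ⟨u, hu1, hu2⟩ := Set.not_subset.1 this
    have hau : a ≤ u := hu1 a (by simp)
    have htu' : t ≤ u := hu1 t (by simp)
    refine ⟨u, ?_, hu2⟩
    intro c hc
    rw [Finset.coe_cons, Set.mem_insert_iff] at hc
    rcases hc with rfl | hc
    · exact hau
    · exact le_trans (htu c hc) htu'

end Aux

open ZD in
/-- For a poset `Q` in `P^ℓ_MFP` and finitely many elements
`x₁, …, xₙ` (n ≥ 1), `(({x₁,…,xₙ}^u)^ℓ)^⊥ = x₁^⊥ ∩ ⋯ ∩ xₙ^⊥`. -/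
theorem stmt_10 (Q : Type*) [PartialOrder Q] [OrderBot Q] (hQ : MemPMFPl Q)
    (s : Finset Q) (hs : s.Nonempty) :
    annSet (lCone (uCone (↑s : Set Q))) = ⋂ x ∈ s, ann x := by
  ext y
  simp only [annSet, ann, Set.mem_setOf_eq, Set.mem_iInter]
  constructor
  · intro h x hx
    refine h x ?_
    intro t ht
    exact ht x (by simpa using hx)
  · intro h z hz
    apply Set.eq_singleton_iff_unique_mem.2
    refine ⟨aux_mem_lCone_pair.2 ⟨bot_le, bot_le⟩, ?_⟩
    intro w hw
    obtain ⟨hwz, hwy⟩ := aux_mem_lCone_pair.1 hw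
    by_contra hwbot
    obtain ⟨F, hFmax, hwF⟩ := aux_exists_max_lfilter hwbot
    have hFprime : IsPrimeFilter F := hQ.1 F (hQ.2 F hFmax)
    -- every x ∈ s is not in F
    have hxF : ∀ x ∈ s, x ∉ F := by
      intro x hx hxF
      obtain ⟨c, hc1, hc2⟩ := hFmax.1.2 x hxF w hwF
      have hcx : c ∈ lCone ({x, y} : Set Q) := by
        obtain ⟨h1, h2⟩ := aux_mem_lCone_pair.1 hc1
        exact aux_mem_lCone_pair.2 ⟨h1, le_trans h2 hwy⟩
      have : c = ⊥ := by
        have := h x hx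
        rw [this] at hcx
        exact hcx
      rw [this] at hc2
      exact hFprime.2.1 (aux_bot_mem_univ hFprime.1 hc2)
    obtain ⟨t, htu, htF⟩ := aux_prime_finset hFprime s hs hxF
    have hzt : z ≤ t := hz t htu
    exact htF (aux_upclosed hFprime.1 hwF (le_trans hwz hzt))
end
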